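/- Let A_k be a symmetric invertible matrix and L_k a symmetric positive definite matrix, both of size n. Consider the normal-equation iteration x^{(m)} = x^{(m-1)} + τ L_k⁻¹ A_k L_k⁻¹ (f − A_k x^{(m-1)}) with exact solution x* (A_k x* = f). If τ ρ(L_k⁻¹A_kL_k⁻¹A_k) ≤ 2 − ε for some ε > 0, then the error propagation matrix M = I − τ L_k⁻¹A_kL_k⁻¹A_k satisfies ‖L_k^{1/2} A_k M^ν A_k⁻¹ L_k^{-1/2} · L_k^{1/2}(x^{(0)} − x*)‖ ≤ (C/√ν) ‖x^{(0)} − x*‖_{L_k} for all ν ≥ 1, where ‖y‖_{L_k}² = (L_k y, y) and C depends only on τ and ε; i.e., the smoothing property sup_{x̃≠0} (A_k(x^{(ν)} − x*), x̃)/‖x̃‖_{L_k} ≤ C ν^{-1/2} ‖x^{(0)} − x*‖_{L_k} holds. -/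

import Mathlib

/-!
Write `L = Bᵀ B` with `B` invertible and put `S = B⁻ᵀ A B⁻¹`, a symmetric matrix. Conjugation by `B`
turns the error propagation matrix `M = I - τ L⁻¹ A L⁻¹ A` into `I - τ S²`, so that
`(A M^ν e, y) = (S (I - τ S²)^ν B e, B y)`, while `‖B z‖² = (L z, z)`. The hypothesis on `τ` says
`τ λ² ≤ 2 - ε` for every eigenvalue `λ` of `S`, and by the functional calculus the spectral norm of
`S (I - τ S²)^ν` is the maximum of `|λ (1 - τ λ²)^ν|` over these eigenvalues. With `t = τ λ²` this
is the scalar estimate `t (1 - t)^{2ν} ≤ (1 + 2/ε²)/ν` on `[0, 2 - ε]`, which follows from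
`(1 - s)^ν (1 + ν s) ≤ 1`.
-/

open Matrix
open scoped Matrix.Norms.L2Operator

lemma one_sub_pow_mul_one_add_mul_le_one {s : ℝ} (hs₀ : 0 ≤ s) (hs₁ : s ≤ 1) (ν : ℕ) :
    (1 - s) ^ ν * (1 + ν * s) ≤ 1 :=
  calc (1 - s) ^ ν * (1 + ν * s) ≤ (1 - s) ^ ν * (1 + s) ^ ν :=
        mul_le_mul_of_nonneg_left (one_add_mul_le_pow (by linarith) ν)
          (pow_nonneg (by linarith) ν)
    _ = (1 - s ^ 2) ^ ν := by rw [← mul_pow]; ring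
    _ ≤ 1 := pow_le_one₀ (by nlinarith) (by nlinarith)

lemma mul_one_sub_pow_two_mul_le {ε t : ℝ} (hε : 0 < ε) (ht₀ : 0 ≤ t) (ht : t ≤ 2 - ε)
    {ν : ℕ} (hν : 1 ≤ ν) : t * (1 - t) ^ (2 * ν) ≤ (1 + 2 / ε ^ 2) / ν := by
  have hν₀ : (0 : ℝ) < ν := by exact_mod_cast hν
  rw [le_div_iff₀ hν₀]
  rcases le_total t 1 with ht₁ | ht₁
  · have hp₀ : 0 ≤ (1 - t) ^ ν := pow_nonneg (by linarith) ν
    have hp₁ : (1 - t) ^ ν ≤ 1 := pow_le_one₀ (by linarith) (by linarith)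
    have key := one_sub_pow_mul_one_add_mul_le_one ht₀ ht₁ ν
    have : 0 ≤ 2 / ε ^ 2 := by positivity
    rw [pow_mul']
    nlinarith [mul_le_mul_of_nonneg_left hp₁ (mul_nonneg ht₀ hp₀), mul_nonneg ht₀ hν₀.le]
  · have hε₁ : ε ≤ 1 := by linarith
    have hq₀ : 0 ≤ (1 - ε) ^ ν := pow_nonneg (by linarith) ν
    have hq : (1 - ε) ^ ν * (ν * ε) ≤ 1 := by
      nlinarith [one_sub_pow_mul_one_add_mul_le_one hε.le hε₁ ν]
    have hq' : ((1 - ε) ^ ν) ^ 2 * ν ≤ 1 / ε ^ 2 := by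
      rw [le_div_iff₀ (by positivity)]
      have hν₁ : (1 : ℝ) ≤ ν := by exact_mod_cast hν
      nlinarith [mul_nonneg hq₀ hε.le, mul_nonneg (mul_nonneg hq₀ hε.le) hq₀]
    have hpow : (1 - t) ^ (2 * ν) ≤ ((1 - ε) ^ ν) ^ 2 := by
      rw [pow_mul, ← pow_mul (1 - ε) ν 2, mul_comm ν 2, pow_mul]
      exact pow_le_pow_left₀ (sq_nonneg (1 - t)) (by nlinarith) ν
    calc t * (1 - t) ^ (2 * ν) * ν ≤ 2 * (((1 - ε) ^ ν) ^ 2 * ν) := by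
          have := mul_le_mul hpow (show t ≤ 2 by linarith) ht₀ (sq_nonneg _)
          nlinarith
      _ ≤ 2 * (1 / ε ^ 2) := by gcongr
      _ ≤ 1 + 2 / ε ^ 2 := by rw [mul_one_div]; linarith

lemma abs_mul_one_sub_mul_sq_pow_le {τ ε x : ℝ} (hτ : 0 < τ) (hε : 0 < ε)
    (hx : τ * x ^ 2 ≤ 2 - ε) {ν : ℕ} (hν : 1 ≤ ν) :
    |x * (1 - τ * x ^ 2) ^ ν| ≤ √((1 + 2 / ε ^ 2) / τ) / √ν := by
  rw [← Real.sqrt_div' _ (Nat.cast_nonneg ν)]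
  apply Real.abs_le_sqrt
  have h := mul_one_sub_pow_two_mul_le hε (by positivity) hx hν
  calc (x * (1 - τ * x ^ 2) ^ ν) ^ 2 = τ * x ^ 2 * (1 - τ * x ^ 2) ^ (2 * ν) / τ := by
        field_simp; ring
    _ ≤ (1 + 2 / ε ^ 2) / ν / τ := by gcongr
    _ = (1 + 2 / ε ^ 2) / τ / ν := div_right_comm _ _ _

section Spectrum

variable {n : Type*} [Fintype n] [DecidableEq n]

lemma mul_sq_le_of_mem_spectrum {S : Matrix n n ℝ} {a b : ℝ}
    (h : ∀ v, a * ((S *ᵥ v) ⬝ᵥ (S *ᵥ v)) ≤ b * (v ⬝ᵥ v)) {x : ℝ} (hx : x ∈ spectrum ℝ S) :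
    a * x ^ 2 ≤ b := by
  rw [← spectrum_toLin', ← Module.End.hasEigenvalue_iff_mem_spectrum] at hx
  obtain ⟨v, hv⟩ := hx.exists_hasEigenvector
  have hSv : S *ᵥ v = x • v := by simpa using hv.apply_eq_smul
  have hpos : 0 < v ⬝ᵥ v :=
    (dotProduct_self_star_nonneg v).lt_of_ne' (dotProduct_self_eq_zero.not.mpr hv.2)
  have := h v
  rw [hSv, smul_dotProduct, dotProduct_smul, smul_eq_mul, smul_eq_mul] at this
  exact le_of_mul_le_mul_right (by nlinarith) hpos

lemma dotProduct_mulVec_le_l2_opNorm (M : Matrix n n ℝ) (u w : n → ℝ) :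
    (M *ᵥ u) ⬝ᵥ w ≤ ‖M‖ * √(u ⬝ᵥ u) * √(w ⬝ᵥ w) := by
  have hnorm : ∀ v : n → ℝ, √(v ⬝ᵥ v) = ‖WithLp.toLp 2 v‖ := fun v => by
    rw [← Real.sqrt_sq (norm_nonneg (WithLp.toLp 2 v)), ← real_inner_self_eq_norm_sq,
      EuclideanSpace.inner_toLp_toLp, star_trivial]
  calc (M *ᵥ u) ⬝ᵥ w = inner ℝ (WithLp.toLp 2 (M *ᵥ u)) (WithLp.toLp 2 w) := by
        rw [EuclideanSpace.inner_toLp_toLp, star_trivial, dotProduct_comm]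
    _ ≤ ‖WithLp.toLp 2 (M *ᵥ u)‖ * ‖WithLp.toLp 2 w‖ := real_inner_le_norm _ _
    _ ≤ ‖M‖ * ‖WithLp.toLp 2 u‖ * ‖WithLp.toLp 2 w‖ := by
        gcongr
        exact M.l2_opNorm_mulVec (WithLp.toLp 2 u)
    _ = _ := by rw [hnorm, hnorm]

lemma norm_mul_one_sub_smul_sq_pow_le {S : Matrix n n ℝ} (hS : IsSelfAdjoint S) {τ ε : ℝ}
    (hτ : 0 < τ) (hε : 0 < ε) (hspec : ∀ x ∈ spectrum ℝ S, τ * x ^ 2 ≤ 2 - ε)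
    {ν : ℕ} (hν : 1 ≤ ν) :
    ‖S * (1 - τ • S ^ 2) ^ ν‖ ≤ √((1 + 2 / ε ^ 2) / τ) / √ν := by
  have hcfc : cfc (fun x : ℝ => x * (1 - τ * x ^ 2) ^ ν) S = S * (1 - τ • S ^ 2) ^ ν := by
    rw [cfc_mul (fun x => x) (fun x => (1 - τ * x ^ 2) ^ ν), cfc_pow (fun x => 1 - τ * x ^ 2) ν S,
      cfc_sub (fun _ => 1) (fun x => τ * x ^ 2), cfc_const_one ℝ S, cfc_const_mul τ (· ^ 2) S,
      cfc_pow_id S 2, cfc_id' ℝ S]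
  rw [← hcfc]
  exact norm_cfc_le (by positivity) fun x hx => abs_mul_one_sub_mul_sq_pow_le hτ hε (hspec x hx) hν

end Spectrum

section Conjugation

variable {R n : Type*} [CommRing R] [Fintype n]

lemma dotProduct_transpose_mul_mulVec {m : Type*} [Fintype m] (M N : Matrix m n R) (z z' : n → R) :
    z ⬝ᵥ (Mᵀ * N) *ᵥ z' = (M *ᵥ z) ⬝ᵥ (N *ᵥ z') := by
  rw [← mulVec_mulVec, dotProduct_mulVec, vecMul_transpose]

variable [DecidableEq n]

lemma iterate_sub_eq_pow_mulVec {A P : Matrix n n R} {f xstar : n → R} {x : ℕ → n → R}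
    (hrec : ∀ m, x (m + 1) = x m + P *ᵥ (f - A *ᵥ x m)) (hsol : A *ᵥ xstar = f) (m : ℕ) :
    x m - xstar = (1 - P * A) ^ m *ᵥ (x 0 - xstar) := by
  induction m with
  | zero => simp
  | succ m ih =>
    rw [hrec, pow_succ', ← mulVec_mulVec, ← ih, ← hsol, sub_mulVec, one_mulVec, ← mulVec_mulVec]
    simp only [mulVec_sub]
    abel

lemma mul_inv_mul_eq_transpose_mul {A : Matrix n n R} (B : Matrix n n R) (hA : A.IsSymm) :
    A * (Bᵀ * B)⁻¹ * A = (B⁻¹ᵀ * A)ᵀ * (B⁻¹ᵀ * A) := by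
  rw [Matrix.mul_inv_rev, transpose_mul, transpose_transpose, hA.eq, transpose_nonsing_inv]
  simp only [Matrix.mul_assoc]

variable {A B : Matrix n n R} [Invertible B]

lemma semiconjBy_one_sub_smul_mul (τ : R) :
    SemiconjBy B (1 - τ • ((Bᵀ * B)⁻¹ * A * (Bᵀ * B)⁻¹) * A) (1 - τ • (B⁻¹ᵀ * A * B⁻¹) ^ 2) := by
  rw [SemiconjBy, Matrix.mul_inv_rev, transpose_nonsing_inv, sq]
  simp only [Matrix.mul_sub, Matrix.sub_mul, Matrix.mul_one, Matrix.one_mul, Matrix.mul_smul,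
    Matrix.smul_mul, Matrix.mul_assoc, inv_mul_of_invertible, mul_inv_cancel_left_of_invertible]

lemma eq_transpose_mul_mul : A = Bᵀ * (B⁻¹ᵀ * A * B⁻¹) * B := by
  rw [transpose_nonsing_inv]
  simp only [Matrix.mul_assoc, inv_mul_of_invertible, mul_one, mul_inv_cancel_left_of_invertible]

lemma mul_one_sub_smul_mul_pow_eq (τ : R) (ν : ℕ) :
    A * (1 - τ • ((Bᵀ * B)⁻¹ * A * (Bᵀ * B)⁻¹) * A) ^ ν =
      Bᵀ * ((B⁻¹ᵀ * A * B⁻¹) * (1 - τ • (B⁻¹ᵀ * A * B⁻¹) ^ 2) ^ ν) * B := by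
  nth_rewrite 1 [eq_transpose_mul_mul (A := A) (B := B)]
  rw [Matrix.mul_assoc, ((semiconjBy_one_sub_smul_mul τ).pow_right ν).eq]
  simp only [Matrix.mul_assoc]

end Conjugation

lemma mul_sq_le_of_mem_spectrum_transpose_inv_mul_mul {n : Type*} [Fintype n] [DecidableEq n]
    {A B : Matrix n n ℝ} [Invertible B] (hA : A.IsSymm) {a b : ℝ}
    (h : ∀ v, a * (v ⬝ᵥ (A * (Bᵀ * B)⁻¹ * A) *ᵥ v) ≤ b * (v ⬝ᵥ (Bᵀ * B) *ᵥ v))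
    {x : ℝ} (hx : x ∈ spectrum ℝ (B⁻¹ᵀ * A * B⁻¹)) : a * x ^ 2 ≤ b := by
  refine mul_sq_le_of_mem_spectrum (fun v => ?_) hx
  have hA' : (B⁻¹ *ᵥ v) ⬝ᵥ (A * (Bᵀ * B)⁻¹ * A) *ᵥ (B⁻¹ *ᵥ v) =
      ((B⁻¹ᵀ * A * B⁻¹) *ᵥ v) ⬝ᵥ ((B⁻¹ᵀ * A * B⁻¹) *ᵥ v) := by
    rw [mul_inv_mul_eq_transpose_mul B hA, dotProduct_transpose_mul_mulVec, mulVec_mulVec]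
  have hL' : (B⁻¹ *ᵥ v) ⬝ᵥ (Bᵀ * B) *ᵥ (B⁻¹ *ᵥ v) = v ⬝ᵥ v := by
    rw [dotProduct_transpose_mul_mulVec, mulVec_mulVec, mul_inv_of_invertible, one_mulVec]
  simpa only [hA', hL'] using h (B⁻¹ *ᵥ v)

/-- Smoothing property of the damped preconditioned normal-equation smoother: if `A_k` is
symmetric and invertible, `L_k` symmetric positive definite, and
`τ ρ(L_k⁻¹A_kL_k⁻¹A_k) ≤ 2 − ε` (expressed via Rayleigh quotients:
`τ·vᵀAL⁻¹Av ≤ (2−ε)·vᵀLv`), then the iterates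
`x⁽ᵐ⁾ = x⁽ᵐ⁻¹⁾ + τL⁻¹AL⁻¹(f − Ax⁽ᵐ⁻¹⁾)` satisfy, for a constant `C = C(τ,ε)`,
`(A(x⁽ᵛ⁾ − x*), x̃) ≤ C ν^{-1/2} ‖x⁽⁰⁾ − x*‖_L ‖x̃‖_L` for all `x̃`,
where `‖y‖_L² = (Ly, y)`. -/
theorem stmt_7 (τ ε : ℝ) (hτ : 0 < τ) (hε : 0 < ε) :
    ∃ C : ℝ, 0 < C ∧
      ∀ (n : ℕ) (A L : Matrix (Fin n) (Fin n) ℝ),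
        A.IsSymm → IsUnit A.det → L.IsSymm → L.PosDef →
        (∀ v : Fin n → ℝ,
          τ * (v ⬝ᵥ (A * L⁻¹ * A).mulVec v) ≤ (2 - ε) * (v ⬝ᵥ L.mulVec v)) →
        ∀ (f xstar x0 : Fin n → ℝ) (x : ℕ → Fin n → ℝ),
          x 0 = x0 →
          (∀ m : ℕ, x (m + 1) = x m + τ • (L⁻¹ * A * L⁻¹).mulVec (f - A.mulVec (x m))) →
          A.mulVec xstar = f →
          ∀ ν : ℕ, 1 ≤ ν → ∀ y : Fin n → ℝ,
            (A.mulVec (x ν - xstar)) ⬝ᵥ y ≤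
              C / Real.sqrt ν * Real.sqrt ((x0 - xstar) ⬝ᵥ L.mulVec (x0 - xstar)) *
                Real.sqrt (y ⬝ᵥ L.mulVec y) := by
  refine ⟨√((1 + 2 / ε ^ 2) / τ), by positivity, ?_⟩
  intro n A L hA _ _ hL hray f xstar x0 x hx0 hrec hsol ν hν y
  obtain ⟨B, hB, rfl⟩ : ∃ B, IsUnit B ∧ L = Bᵀ * B := by
    open scoped MatrixOrder in
    simpa only [star_eq_conjTranspose, conjTranspose_eq_transpose_of_trivial] using
      CStarAlgebra.isStrictlyPositive_iff_eq_star_mul_self.mp hL.isStrictlyPositive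
  have := hB.invertible
  set S := B⁻¹ᵀ * A * B⁻¹
  have hS : IsSelfAdjoint S := by
    simpa only [conjTranspose_eq_transpose_of_trivial] using
      (isHermitian_conjTranspose_mul_mul B⁻¹ (isHermitian_iff_isSymm.mpr hA)).isSelfAdjoint
  have hspec : ∀ t ∈ spectrum ℝ S, τ * t ^ 2 ≤ 2 - ε := fun t =>
    mul_sq_le_of_mem_spectrum_transpose_inv_mul_mul hA hray
  have herr : A *ᵥ (x ν - xstar) = Bᵀ *ᵥ ((S * (1 - τ • S ^ 2) ^ ν) *ᵥ (B *ᵥ (x0 - xstar))) := by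
    rw [iterate_sub_eq_pow_mulVec (fun m => (hrec m).trans (by rw [smul_mulVec τ])) hsol, hx0,
      mulVec_mulVec, mul_one_sub_smul_mul_pow_eq, mulVec_mulVec, mulVec_mulVec]
  calc (A *ᵥ (x ν - xstar)) ⬝ᵥ y
      = ((S * (1 - τ • S ^ 2) ^ ν) *ᵥ (B *ᵥ (x0 - xstar))) ⬝ᵥ (B *ᵥ y) := by
        rw [herr, mulVec_transpose, ← dotProduct_mulVec]
    _ ≤ ‖S * (1 - τ • S ^ 2) ^ ν‖ * √((B *ᵥ (x0 - xstar)) ⬝ᵥ (B *ᵥ (x0 - xstar))) *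
          √((B *ᵥ y) ⬝ᵥ (B *ᵥ y)) := dotProduct_mulVec_le_l2_opNorm _ _ _
    _ ≤ _ := by
        rw [← dotProduct_transpose_mul_mulVec, ← dotProduct_transpose_mul_mulVec]
        gcongr
        exact norm_mul_one_sub_smul_sq_pow_le hS hτ hε hspec hν
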